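/- arXiv:2301.12942 — 3 statements merged into one kernel-verified Lean document; each statement's English description precedes it below -/
import Mathlib

section
/- Consider Follow-the-Regularized-Leader with the log-barrier regularizer: let A ≥ 1 be a number of actions, η > 0 a learning rate, and c_1, …, c_T ∈ ℝ^A arbitrary loss vectors (with no lower or upper bound on their entries). Let Ψ(p) = ∑_{i=1}^A ln(1/p_i), and for each t = 1, …, T let x_t be the minimizer over the probability simplex Δ(A) of p ↦ Ψ(p) + η ∑_{t'<t} ⟨p, c_{t'}⟩ (each x_t has strictly positive coordinates). Then for every y ∈ Δ(A) with strictly positive coordinates, ∑_{t=1}^T ⟨x_t − y, c_t⟩ ≤ (Ψ(y) − Ψ(x_1))/η + (η/2) ∑_{t=1}^T ∑_{i=1}^A x_{t,i} c_{t,i}². -/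
/-!
The iterate `x_t` minimizes `F_t = Ψ + η ⟨·, c_1 + ⋯ + c_{t-1}⟩` over the open simplex, so
first-order optimality gives `F_t z - F_t x_t ≥ D(z, x_t)` with `D` the Bregman divergence of `Ψ`.
Since all coordinates of `x_t` and `z` lie in `(0, 1]`, the scalar bound
`s - 1 - log s ≥ (s - 1)² / (2 max 1 s)` yields
`⟨x_t - z, η c_t⟩ ≤ D(z, x_t) + (η² / 2) ∑ x_{t,i} c_{t,i}²` for losses of either sign.
Together these give a one-round inequality, and the rounds telescope.
-/

open Finset

namespace Real

lemma sq_sub_one_div_two_le_sub_one_sub_log {s : ℝ} (hs : 0 < s) (hs1 : s ≤ 1) :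
    (s - 1) ^ 2 / 2 ≤ s - 1 - log s := by
  have hu : |1 - s| < 1 := by rw [abs_lt]; constructor <;> linarith
  have := sum_le_hasSum (range 2) (fun n _ => by positivity) (hasSum_pow_div_log_of_abs_lt_one hu)
  norm_num [sum_range_succ] at this
  linarith

lemma sq_sub_one_div_two_mul_le_sub_one_sub_log {s : ℝ} (hs : 1 ≤ s) :
    (s - 1) ^ 2 / (2 * s) ≤ s - 1 - log s := by
  have h := self_le_sinh_iff.2 (log_nonneg hs)
  rw [sinh_log (by linarith)] at h
  have : (s - 1) ^ 2 / (2 * s) = s - 1 - (s - s⁻¹) / 2 := by field_simp; ring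
  linarith

lemma sq_sub_div_two_mul_le_div_sub_one_sub_log {x z : ℝ} (hx : 0 < x) (hx1 : x ≤ 1) (hz : 0 < z)
    (hz1 : z ≤ 1) : (x - z) ^ 2 / (2 * x) ≤ z / x - 1 - log (z / x) := by
  rcases le_total z x with hzx | hxz
  · calc (x - z) ^ 2 / (2 * x) = x * ((z / x - 1) ^ 2 / 2) := by field_simp; ring
      _ ≤ 1 * ((z / x - 1) ^ 2 / 2) := by gcongr
      _ ≤ z / x - 1 - log (z / x) := by
        rw [one_mul]
        exact sq_sub_one_div_two_le_sub_one_sub_log (by positivity) ((div_le_one hx).2 hzx)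
  · calc (x - z) ^ 2 / (2 * x) = z * ((z / x - 1) ^ 2 / (2 * (z / x))) := by field_simp; ring
      _ ≤ 1 * ((z / x - 1) ^ 2 / (2 * (z / x))) := by gcongr
      _ ≤ z / x - 1 - log (z / x) := by
        rw [one_mul]
        exact sq_sub_one_div_two_mul_le_sub_one_sub_log ((one_le_div hx).2 hxz)

lemma sub_mul_le_div_sub_one_sub_log_add {x z : ℝ} (a : ℝ) (hx : 0 < x) (hx1 : x ≤ 1)
    (hz : 0 < z) (hz1 : z ≤ 1) :
    (x - z) * a ≤ z / x - 1 - log (z / x) + x * a ^ 2 / 2 := by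
  have hsq : (x - z) * a - x * a ^ 2 / 2 ≤ (x - z) ^ 2 / (2 * x) := by
    rw [le_div_iff₀ (by positivity)]
    nlinarith [sq_nonneg (x - z - x * a)]
  linarith [sq_sub_div_two_mul_le_div_sub_one_sub_log hx hx1 hz hz1]

lemma hasDerivAt_log_one_div_add_mul {a b : ℝ} (ha : a ≠ 0) :
    HasDerivAt (fun l : ℝ => log (1 / (a + l * b))) (-(b / a)) 0 := by
  have hline : HasDerivAt (fun l : ℝ => a + l * b) b 0 := by
    simpa using ((hasDerivAt_id (0 : ℝ)).mul_const b).const_add a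
  have := (hline.log (by simpa using ha)).fun_neg
  simp only [zero_mul, add_zero] at this
  simpa only [one_div, log_inv] using this

end Real

lemma Fin.sum_Iio_eq_sum_range {M : Type*} [AddCommMonoid M] {n : ℕ} (f : ℕ → M) (t : Fin n) :
    ∑ s ∈ Iio t, f s = ∑ s ∈ range t, f s := by
  rw [← Nat.Iio_eq_range, ← Fin.map_valEmbedding_Iio, sum_map]
  rfl

section

variable {ι : Type*} [Fintype ι]

/-- `hstep` is the one-round bound for the FTRL iterate `x t` of the cumulative losses
`∑ s < t, g s`; comparing round `t` with `z = x (t + 1)` makes these bounds telescope. -/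
theorem ftrl_regret_le {K : Set (ι → ℝ)} {Ψ : (ι → ℝ) → ℝ} {x g : ℕ → ι → ℝ} {δ : ℕ → ℝ}
    {n : ℕ} (hxK : ∀ t < n, x t ∈ K) (hx₀ : ∀ z ∈ K, Ψ (x 0) ≤ Ψ z)
    (hstep : ∀ t < n, ∀ z ∈ K, Ψ (x t) + x t ⬝ᵥ ∑ s ∈ range t, g s + (x t - z) ⬝ᵥ g t
      ≤ Ψ z + z ⬝ᵥ ∑ s ∈ range t, g s + δ t)
    {z : ι → ℝ} (hz : z ∈ K) :
    ∑ t ∈ range n, (x t - z) ⬝ᵥ g t ≤ Ψ z - Ψ (x 0) + ∑ t ∈ range n, δ t := by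
  induction n generalizing z with
  | zero => simpa using hx₀ z hz
  | succ n ih =>
    have hprev := ih (fun t ht => hxK t (by omega)) (fun t ht => hstep t (by omega))
      (hxK n n.lt_succ_self)
    have hlast := hstep n n.lt_succ_self z hz
    have hsplit : ∑ t ∈ range n, (x t - z) ⬝ᵥ g t
        = ∑ t ∈ range n, (x t - x n) ⬝ᵥ g t + (x n - z) ⬝ᵥ ∑ s ∈ range n, g s := by
      rw [dotProduct_sum, ← sum_add_distrib]
      exact sum_congr rfl fun t _ => by rw [← add_dotProduct, sub_add_sub_cancel]
    rw [sum_range_succ, sum_range_succ, hsplit, sub_dotProduct]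
    linarith

def openSimplex (ι : Type*) [Fintype ι] : Set (ι → ℝ) := {p | (∀ i, 0 < p i) ∧ ∑ i, p i = 1}

noncomputable def logBarrier (p : ι → ℝ) : ℝ := ∑ i, Real.log (1 / p i)

/-- The Bregman divergence of `logBarrier` (the Itakura–Saito divergence). -/
noncomputable def logBarrierBregman (z x : ι → ℝ) : ℝ := ∑ i, (z i / x i - 1 - Real.log (z i / x i))

lemma convex_openSimplex : Convex ℝ (openSimplex ι) := by
  rintro p ⟨hp, hp1⟩ q ⟨hq, hq1⟩ a b ha hb hab
  refine ⟨fun i => ?_, ?_⟩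
  · rcases ha.eq_or_lt with rfl | ha
    · simp_all
    · exact add_pos_of_pos_of_nonneg (mul_pos ha (hp i)) (mul_nonneg hb (hq i).le)
  · simp [sum_add_distrib, ← mul_sum, hp1, hq1, hab]

lemma le_one_of_mem_openSimplex {p : ι → ℝ} (hp : p ∈ openSimplex ι) (i : ι) : p i ≤ 1 :=
  hp.2 ▸ single_le_sum (fun j _ => (hp.1 j).le) (mem_univ i)

lemma sub_dotProduct_le_logBarrierBregman_add {x z : ι → ℝ} (hx : x ∈ openSimplex ι)
    (hz : z ∈ openSimplex ι) (g : ι → ℝ) :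
    (x - z) ⬝ᵥ g ≤ logBarrierBregman z x + (∑ i, x i * g i ^ 2) / 2 := by
  rw [logBarrierBregman, sum_div, ← sum_add_distrib]
  exact sum_le_sum fun i _ => Real.sub_mul_le_div_sub_one_sub_log_add (g i) (hx.1 i)
    (le_one_of_mem_openSimplex hx i) (hz.1 i) (le_one_of_mem_openSimplex hz i)

/-- `-∑ i, (z i / x i - 1)` is the derivative of `logBarrier` at `x` in the direction `z - x`,
so this is first-order optimality of `x`. -/
lemma sum_div_sub_one_le_sub_dotProduct_of_isMinOn {M x z : ι → ℝ} (hx : x ∈ openSimplex ι)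
    (hz : z ∈ openSimplex ι) (hmin : IsMinOn (fun p => logBarrier p + p ⬝ᵥ M) (openSimplex ι) x) :
    ∑ i, (z i / x i - 1) ≤ (z - x) ⬝ᵥ M := by
  set g : ℝ → ℝ := fun l => logBarrier (x + l • (z - x)) + (x + l • (z - x)) ⬝ᵥ M
  have hg : HasDerivAt g ((z - x) ⬝ᵥ M - ∑ i, (z i / x i - 1)) 0 := by
    have hg_eq : g = fun l => ∑ i, (Real.log (1 / (x i + l * (z i - x i)))
        + (x i + l * (z i - x i)) * M i) := by
      funext l
      simp [g, logBarrier, dotProduct, sum_add_distrib]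
    have hderiv_eq : (z - x) ⬝ᵥ M - ∑ i, (z i / x i - 1)
        = ∑ i, (-((z i - x i) / x i) + (z i - x i) * M i) := by
      rw [dotProduct, ← sum_sub_distrib]
      refine sum_congr rfl fun i _ => ?_
      field_simp [(hx.1 i).ne']
      simp only [Pi.sub_apply]
      ring
    rw [hg_eq, hderiv_eq]
    refine HasDerivAt.fun_sum fun i _ => (Real.hasDerivAt_log_one_div_add_mul (hx.1 i).ne').add ?_
    simpa using (((hasDerivAt_id (0 : ℝ)).mul_const (z i - x i)).const_add (x i)).mul_const (M i)
  have hloc : IsLocalMinOn g (Set.Icc 0 1) 0 :=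
    IsMinOn.localize fun l hl => by
      simpa [g] using hmin (convex_openSimplex.add_smul_sub_mem hx hz hl)
  have hdir : (1 : ℝ) ∈ posTangentConeAt (Set.Icc (0 : ℝ) 1) 0 :=
    mem_posTangentConeAt_of_segment_subset (by simp [segment_eq_Icc])
  have := hloc.hasFDerivWithinAt_nonneg hg.hasDerivWithinAt.hasFDerivWithinAt hdir
  simp only [ContinuousLinearMap.toSpanSingleton_apply, one_smul] at this
  linarith

lemma logBarrierBregman_le_of_isMinOn {M x z : ι → ℝ} (hx : x ∈ openSimplex ι)
    (hz : z ∈ openSimplex ι) (hmin : IsMinOn (fun p => logBarrier p + p ⬝ᵥ M) (openSimplex ι) x) :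
    logBarrierBregman z x ≤ (logBarrier z + z ⬝ᵥ M) - (logBarrier x + x ⬝ᵥ M) := by
  have hlog : logBarrier z - logBarrier x = ∑ i, -Real.log (z i / x i) := by
    rw [logBarrier, logBarrier, ← sum_sub_distrib]
    refine sum_congr rfl fun i _ => ?_
    rw [one_div, one_div, Real.log_inv, Real.log_inv,
      Real.log_div (hz.1 i).ne' (hx.1 i).ne']
    ring
  have hsplit : logBarrierBregman z x = ∑ i, (z i / x i - 1) + ∑ i, -Real.log (z i / x i) := by
    rw [logBarrierBregman, ← sum_add_distrib]
    exact sum_congr rfl fun i _ => by ring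
  have := sum_div_sub_one_le_sub_dotProduct_of_isMinOn hx hz hmin
  rw [sub_dotProduct] at this
  linarith

lemma logBarrier_ftrl_step {η : ℝ} (hη : 0 < η) {M x z : ι → ℝ} (g : ι → ℝ)
    (hx : x ∈ openSimplex ι) (hz : z ∈ openSimplex ι)
    (hmin : IsMinOn (fun p => logBarrier p + η * p ⬝ᵥ M) (openSimplex ι) x) :
    logBarrier x / η + x ⬝ᵥ M + (x - z) ⬝ᵥ g
      ≤ logBarrier z / η + z ⬝ᵥ M + η / 2 * ∑ i, x i * g i ^ 2 := by
  have hmin' : IsMinOn (fun p => logBarrier p + p ⬝ᵥ (η • M)) (openSimplex ι) x := by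
    simpa only [dotProduct_smul, smul_eq_mul] using hmin
  have hB := logBarrierBregman_le_of_isMinOn hx hz hmin'
  have hS := sub_dotProduct_le_logBarrierBregman_add hx hz (η • g)
  have hsq : ∑ i, x i * (η • g) i ^ 2 = η ^ 2 * ∑ i, x i * g i ^ 2 := by
    rw [mul_sum]
    exact sum_congr rfl fun i _ => by simp only [Pi.smul_apply, smul_eq_mul]; ring
  simp only [dotProduct_smul, smul_eq_mul, hsq] at hB hS
  rw [← mul_le_mul_iff_of_pos_left hη]
  field_simp
  linarith

end

theorem ftrl_log_barrier_regret_general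
    (A T : ℕ) (hT : 0 < T) (η : ℝ) (hη : 0 < η)
    (c : Fin T → Fin A → ℝ) (x : Fin T → Fin A → ℝ)
    (hx_pos : ∀ t i, 0 < x t i)
    (hx_sum : ∀ t, ∑ i, x t i = 1)
    (hx_min : ∀ t : Fin T, ∀ p : Fin A → ℝ, (∀ i, 0 < p i) → (∑ i, p i = 1) →
      (∑ i, Real.log (1 / x t i))
          + η * ∑ t' ∈ Finset.univ.filter (fun t' => t' < t), ∑ i, x t i * c t' i
        ≤ (∑ i, Real.log (1 / p i))
          + η * ∑ t' ∈ Finset.univ.filter (fun t' => t' < t), ∑ i, p i * c t' i)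
    (y : Fin A → ℝ) (hy_pos : ∀ i, 0 < y i) (hy_sum : ∑ i, y i = 1) :
    ∑ t, ∑ i, (x t i - y i) * c t i ≤
      ((∑ i, Real.log (1 / y i)) - (∑ i, Real.log (1 / x ⟨0, hT⟩ i))) / η
        + (η / 2) * ∑ t, ∑ i, x t i * (c t i) ^ 2 := by
  set x' : ℕ → Fin A → ℝ := fun t => if h : t < T then x ⟨t, h⟩ else 0
  set c' : ℕ → Fin A → ℝ := fun t => if h : t < T then c ⟨t, h⟩ else 0
  have hx' (t : Fin T) : x' t = x t := dif_pos t.isLt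
  have hc' (t : Fin T) : c' t = c t := dif_pos t.isLt
  have hxK (t : Fin T) : x t ∈ openSimplex (Fin A) := ⟨hx_pos t, hx_sum t⟩
  have hprefix (t : Fin T) (q : Fin A → ℝ) :
      ∑ t' ∈ univ.filter (· < t), ∑ i, q i * c t' i = q ⬝ᵥ ∑ s ∈ range t, c' s := by
    rw [filter_gt_eq_Iio, dotProduct_sum, ← Fin.sum_Iio_eq_sum_range]
    simp only [hc']
    rfl
  have hmin (t : Fin T) : IsMinOn (fun p => logBarrier p + η * p ⬝ᵥ ∑ s ∈ range t, c' s)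
      (openSimplex (Fin A)) (x t) := fun p hp => by
    have h := hx_min t p hp.1 hp.2
    rwa [hprefix, hprefix] at h
  have h := ftrl_regret_le (K := openSimplex (Fin A)) (Ψ := fun p => logBarrier p / η)
    (δ := fun t => η / 2 * ∑ i, x' t i * c' t i ^ 2) (n := T)
    (fun t ht => hx' ⟨t, ht⟩ ▸ hxK ⟨t, ht⟩)
    (fun z hz => by
      have h0 : logBarrier (x ⟨0, hT⟩) ≤ logBarrier z := by simpa using hmin ⟨0, hT⟩ hz
      simpa [hx' ⟨0, hT⟩] using div_le_div_of_nonneg_right h0 hη.le)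
    (fun t ht z hz => by
      simpa [hx' ⟨t, ht⟩] using
        logBarrier_ftrl_step hη (c' t) (hxK ⟨t, ht⟩) hz (hmin ⟨t, ht⟩))
    (show y ∈ openSimplex (Fin A) from ⟨hy_pos, hy_sum⟩)
  rw [← Fin.sum_univ_eq_sum_range, ← Fin.sum_univ_eq_sum_range] at h
  simp only [hx', hc', hx' ⟨0, hT⟩] at h
  rw [sub_div, mul_sum]
  exact h

/-- Regret bound for Follow-the-Regularized-Leader with the log-barrier regularizer,
with arbitrary (possibly very negative) loss vectors. -/
theorem ftrl_log_barrier_regret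
    (A T : ℕ) (hA : 1 ≤ A) (hT : 0 < T) (η : ℝ) (hη : 0 < η)
    (c : Fin T → Fin A → ℝ) (x : Fin T → Fin A → ℝ)
    (hx_pos : ∀ t i, 0 < x t i)
    (hx_sum : ∀ t, ∑ i, x t i = 1)
    (hx_min : ∀ t : Fin T, ∀ p : Fin A → ℝ, (∀ i, 0 < p i) → (∑ i, p i = 1) →
      (∑ i, Real.log (1 / x t i))
          + η * ∑ t' ∈ Finset.univ.filter (fun t' => t' < t), ∑ i, x t i * c t' i
        ≤ (∑ i, Real.log (1 / p i))
          + η * ∑ t' ∈ Finset.univ.filter (fun t' => t' < t), ∑ i, p i * c t' i)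
    (y : Fin A → ℝ) (hy_pos : ∀ i, 0 < y i) (hy_sum : ∑ i, y i = 1) :
    ∑ t, ∑ i, (x t i - y i) * c t i ≤
      ((∑ i, Real.log (1 / y i)) - (∑ i, Real.log (1 / x ⟨0, hT⟩ i))) / η
        + (η / 2) * ∑ t, ∑ i, x t i * (c t i) ^ 2 :=
  ftrl_log_barrier_regret_general A T hT η hη c x hx_pos hx_sum hx_min y hy_pos hy_sum
end

section
/- Consider the Hedge (exponential weights) algorithm: let A ≥ 1, η > 0, and c_1, …, c_T ∈ ℝ^A be loss vectors satisfying η c_{t,i} ≥ −1 for all t ∈ [T] and i ∈ [A]. For t = 1, …, T define x_t ∈ Δ(A) by x_{t,i} = exp(−η ∑_{t'<t} c_{t',i}) / ∑_{i'=1}^A exp(−η ∑_{t'<t} c_{t',i'}) (so x_1 is the uniform distribution). Then for every distribution y ∈ Δ(A), ∑_{t=1}^T ⟨x_t − y, c_t⟩ ≤ (ln A)/η + η ∑_{t=1}^T ∑_{i=1}^A x_{t,i} c_{t,i}². -/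
/-!
Track the potential Φₙ = log ∑ᵢ exp (-η Lₙᵢ), where Lₙ is the vector of cumulative losses of the
first n rounds, so that x_t is the softmax of -η L_t. One round changes the potential by
log ∑ᵢ x_{t,i} exp (-η c_{t,i}); since eᶻ ≤ 1 + z + z² for z ≤ 1 and log u ≤ u - 1, the potential
drops by at least η⟨x_t, c_t⟩ - η² ∑ᵢ x_{t,i} c_{t,i}². It starts at Φ₀ = log A, and a log-sum-exp
dominates every average of its arguments, so Φ_T ≥ -η⟨y, L_T⟩. Telescoping and dividing by η
gives the bound.
-/

open Finset

namespace Real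

theorem exp_le_one_add_add_sq {x : ℝ} (hx : x ≤ 1) : exp x ≤ 1 + x + x ^ 2 := by
  rcases le_or_gt x (-1) with hx' | hx'
  · have : exp x ≤ 1 := exp_le_one_iff.2 (by linarith)
    nlinarith
  · have := abs_le.1 (abs_exp_sub_one_sub_id_le (abs_le.2 ⟨hx'.le, hx⟩))
    linarith

variable {ι : Type*} [Fintype ι]

theorem log_sum_mul_exp_le {p z : ι → ℝ} (hp : ∀ i, 0 ≤ p i) (hp_sum : ∑ i, p i = 1)
    (hz : ∀ i, z i ≤ 1) :
    log (∑ i, p i * exp (z i)) ≤ ∑ i, p i * z i + ∑ i, p i * z i ^ 2 := by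
  obtain ⟨j, -, hj⟩ := exists_lt_of_sum_lt (s := univ) (f := fun _ => (0 : ℝ)) (g := p)
    (by simp [hp_sum])
  have hpos : 0 < ∑ i, p i * exp (z i) :=
    sum_pos' (fun i _ => mul_nonneg (hp i) (exp_pos _).le) ⟨j, mem_univ j, mul_pos hj (exp_pos _)⟩
  calc log (∑ i, p i * exp (z i)) ≤ ∑ i, p i * exp (z i) - 1 := log_le_sub_one_of_pos hpos
    _ ≤ ∑ i, p i * (1 + z i + z i ^ 2) - 1 := by
      gcongr with i
      exacts [hp i, exp_le_one_add_add_sq (hz i)]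
    _ = ∑ i, p i * z i + ∑ i, p i * z i ^ 2 := by
      simp only [mul_add, mul_one, sum_add_distrib, hp_sum]
      ring

theorem sum_exp_pos [Nonempty ι] (a : ι → ℝ) : 0 < ∑ i, exp (a i) :=
  sum_pos (fun _ _ => exp_pos _) univ_nonempty

theorem sum_mul_le_log_sum_exp {y : ι → ℝ} (hy : ∀ i, 0 ≤ y i) (hy_sum : ∑ i, y i = 1)
    (a : ι → ℝ) : ∑ i, y i * a i ≤ log (∑ i, exp (a i)) := by
  have ha : ∀ i, a i ≤ log (∑ j, exp (a j)) := fun i => by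
    have hle : exp (a i) ≤ ∑ j, exp (a j) :=
      single_le_sum (f := fun j => exp (a j)) (fun j _ => (exp_pos _).le) (mem_univ i)
    exact (le_log_iff_exp_le ((exp_pos _).trans_le hle)).2 hle
  calc ∑ i, y i * a i ≤ ∑ i, y i * log (∑ j, exp (a j)) := by gcongr with i; exacts [hy i, ha i]
    _ = log (∑ j, exp (a j)) := by rw [← sum_mul, hy_sum, one_mul]

end Real

open Real

section

variable {ι : Type*} [Fintype ι]

noncomputable def softmax (a : ι → ℝ) (i : ι) : ℝ := exp (a i) / ∑ j, exp (a j)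

theorem softmax_nonneg (a : ι → ℝ) (i : ι) : 0 ≤ softmax a i := by
  unfold softmax; positivity

theorem sum_softmax [Nonempty ι] (a : ι → ℝ) : ∑ i, softmax a i = 1 := by
  simp only [softmax, ← sum_div]
  exact div_self (sum_exp_pos a).ne'

theorem log_sum_exp_add_sub_log_sum_exp [Nonempty ι] (a b : ι → ℝ) :
    log (∑ i, exp (a i + b i)) - log (∑ i, exp (a i)) = log (∑ i, softmax a i * exp (b i)) := by
  rw [← log_div (sum_exp_pos _).ne' (sum_exp_pos _).ne', sum_div]
  simp only [softmax, exp_add]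
  congr 1
  exact sum_congr rfl fun _ _ => by ring

theorem mul_sum_softmax_mul_le [Nonempty ι] {η : ℝ} (a c : ι → ℝ) (hc : ∀ i, -1 ≤ η * c i) :
    η * ∑ i, softmax a i * c i ≤ log (∑ i, exp (a i)) - log (∑ i, exp (a i - η * c i))
      + η ^ 2 * ∑ i, softmax a i * c i ^ 2 := by
  have hlog := log_sum_exp_add_sub_log_sum_exp a (fun i => -(η * c i))
  have hbound := log_sum_mul_exp_le (softmax_nonneg a) (sum_softmax a)
    (z := fun i => -(η * c i)) fun i => by linarith [hc i]
  simp only [← sub_eq_add_neg] at hlog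
  simp only [mul_neg, sum_neg_distrib, neg_sq, mul_pow, mul_left_comm _ η, ← mul_sum,
    mul_left_comm _ (η ^ 2)] at hbound
  linarith

end

section

variable {ι : Type*}

/-- Rounds are indexed from `0`: `cumLoss c n` sums the losses of the rounds `t < n`. -/
def cumLoss {T : ℕ} (c : Fin T → ι → ℝ) (n : ℕ) (i : ι) : ℝ :=
  ∑ t ∈ univ.filter (fun t : Fin T => (t : ℕ) < n), c t i

variable {T : ℕ} (c : Fin T → ι → ℝ) (i : ι)

@[simp]
theorem cumLoss_zero : cumLoss c 0 i = 0 := by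
  simp [cumLoss]

theorem cumLoss_succ (t : Fin T) : cumLoss c (t + 1) i = cumLoss c t i + c t i := by
  have : univ.filter (fun t' : Fin T => (t' : ℕ) < t + 1)
      = insert t (univ.filter (fun t' : Fin T => (t' : ℕ) < t)) := by
    ext t'
    simp only [mem_filter, mem_univ, true_and, mem_insert, Fin.ext_iff]
    omega
  rw [cumLoss, this, sum_insert (by simp), add_comm]
  rfl

theorem cumLoss_self : cumLoss c T i = ∑ t, c t i := by
  simp [cumLoss]

end

/-- Regret bound for the Hedge (exponential weights) algorithm, for loss vectors
satisfying `η * c t i ≥ -1`. -/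
theorem hedge_regret
    (A T : ℕ) (hA : 1 ≤ A) (η : ℝ) (hη : 0 < η)
    (c : Fin T → Fin A → ℝ) (hc : ∀ t i, η * c t i ≥ -1)
    (x : Fin T → Fin A → ℝ)
    (hx : ∀ t i, x t i =
      Real.exp (-η * ∑ t' ∈ Finset.univ.filter (fun t' => t' < t), c t' i)
        / ∑ i', Real.exp (-η * ∑ t' ∈ Finset.univ.filter (fun t' => t' < t), c t' i'))
    (y : Fin A → ℝ) (hy_nonneg : ∀ i, 0 ≤ y i) (hy_sum : ∑ i, y i = 1) :
    ∑ t, ∑ i, (x t i - y i) * c t i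
      ≤ Real.log A / η + η * ∑ t, ∑ i, x t i * (c t i) ^ 2 := by
  have : Nonempty (Fin A) := Fin.pos_iff_nonempty.1 hA
  set Φ : ℕ → ℝ := fun n => log (∑ i, exp (-η * cumLoss c n i)) with hΦ
  have hx_softmax : ∀ t, x t = softmax (fun i => -η * cumLoss c t i) := fun t => funext (hx t)
  have hstep : ∀ t : Fin T, η * ∑ i, x t i * c t i
      ≤ Φ t - Φ (t + 1) + η ^ 2 * ∑ i, x t i * c t i ^ 2 := fun t => by
    have := mul_sum_softmax_mul_le (fun i => -η * cumLoss c t i) (c t) fun i => (hc t i).le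
    simpa only [hx_softmax, hΦ, cumLoss_succ, mul_add, neg_mul, neg_add, sub_eq_add_neg] using this
  have hlast : -η * ∑ t, ∑ i, y i * c t i ≤ Φ T := by
    convert sum_mul_le_log_sum_exp hy_nonneg hy_sum fun i => -η * cumLoss c T i using 1
    simp only [cumLoss_self, mul_sum]
    rw [sum_comm]
    exact sum_congr rfl fun _ _ => sum_congr rfl fun _ _ => by ring
  have htelescope : ∑ t : Fin T, (Φ t - Φ (t + 1)) = log A - Φ T := by
    rw [Fin.sum_univ_eq_sum_range (fun n => Φ n - Φ (n + 1)), sum_range_sub']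
    simp [hΦ]
  have hsum := sum_le_sum fun t (_ : t ∈ univ) => hstep t
  rw [sum_add_distrib, htelescope, ← mul_sum, ← mul_sum] at hsum
  have hmul : η * ∑ t, ∑ i, (x t i - y i) * c t i
      ≤ η * (log A / η + η * ∑ t, ∑ i, x t i * c t i ^ 2) := by
    simp only [sub_mul, sum_sub_distrib, mul_add, mul_div_cancel₀ _ hη.ne']
    linarith
  exact le_of_mul_le_mul_left hmul hη
end

section
/- Let X be a d×d real symmetric matrix with X ⪯ I. Then the matrix exponential satisfies exp(X) ⪯ I + X + X². -/
/-!
Through the continuous functional calculus, a scalar inequality `f ≤ g` on the spectrum of a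
self-adjoint `a` gives `cfc f a ≤ cfc g a`. Since `a ≤ 1` puts the spectrum in `(-∞, 1]`, it
suffices that `eˣ ≤ 1 + x + x²` for `x ≤ 1`: on `[-1, 1]` this is the Taylor bound
`|eˣ - 1 - x| ≤ x²`, and below `-1` we have `eˣ ≤ 1 < 1 + x + x²`.
-/

theorem Real.exp_le_one_add_add_sq_s8 {x : ℝ} (hx : x ≤ 1) : exp x ≤ 1 + x + x ^ 2 := by
  rcases le_or_gt (-1) x with hx' | hx'
  · linarith [(abs_le.1 (abs_exp_sub_one_sub_id_le (abs_le.2 ⟨hx', hx⟩))).2]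
  · nlinarith [exp_le_one_iff.2 (hx'.trans neg_one_lt_zero).le]

theorem IsSelfAdjoint.exp_le_one_add_add_sq_s8 {A : Type*} [NormedRing A] [StarRing A]
    [NormedAlgebra ℝ A] [ContinuousFunctionalCalculus ℝ A IsSelfAdjoint] [PartialOrder A]
    [StarOrderedRing A] [NonnegSpectrumClass ℝ A] {a : A} (ha : IsSelfAdjoint a) (ha1 : a ≤ 1) :
    NormedSpace.exp a ≤ 1 + a + a ^ 2 := by
  have hspec : ∀ x ∈ spectrum ℝ a, x ≤ 1 := by
    simpa using (le_algebraMap_iff_spectrum_le (r := (1 : ℝ)) ha).1 (by simpa using ha1)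
  rw [← CFC.real_exp_eq_normedSpace_exp ha]
  calc cfc Real.exp a ≤ cfc (fun x => 1 + x + x ^ 2) a :=
        cfc_mono fun x hx => Real.exp_le_one_add_add_sq_s8 (hspec x hx)
    _ = 1 + a + a ^ 2 := by
        rw [cfc_add .., cfc_add .., cfc_const_one .., cfc_id' .., cfc_pow_id ..]

section
open scoped Matrix.Norms.L2Operator MatrixOrder

theorem Matrix.IsHermitian.exp_le_one_add_add_sq_s8 {n : Type*} [Fintype n] [DecidableEq n]
    {X : Matrix n n ℝ} (hX : X.IsHermitian) (hX1 : X ≤ 1) :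
    NormedSpace.exp X ≤ 1 + X + X ^ 2 :=
  IsSelfAdjoint.exp_le_one_add_add_sq_s8 hX hX1
end

/-- For a real symmetric matrix `X ⪯ I`, `exp(X) ⪯ I + X + X²` (Loewner order). -/
theorem matrix_exp_le_one_add_add_sq
    {d : ℕ} (X : Matrix (Fin d) (Fin d) ℝ) (hX : X.IsHermitian)
    (hXle : ((1 : Matrix (Fin d) (Fin d) ℝ) - X).PosSemidef) :
    ((1 + X + X ^ 2) - NormedSpace.exp X).PosSemidef :=
  hX.exp_le_one_add_add_sq_s8 hXle
end
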